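/- Goal MDPs are 1-QVI-solvable: in a deterministic goal MDP, if the exploration policy π^expl assigns positive probability to every action in every state, then for every state s, time t, and action a: Q^{π^expl}_t(s,a) > 0 if and only if Q*_t(s,a) = 1 (assuming the goal is reachable from the start, so V*₁(s₁) = 1). Hence any policy greedy with respect to Q^{π^expl} is optimal. -/
import Mathlib


open Finset Classical

/-- Total reward of playing a list of actions from state `s` in a deterministic MDP. -/
def seqReturn {S : Type*} (A : ℕ) (f : S → Fin A → S) (R : S → Fin A → ℝ) :
    S → List (Fin A) → ℝ
  | _, [] => 0
  | s, a :: rest => R s a + seqReturn A f R (f s a) rest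

/-- Value function of a (time-indexed, stochastic) policy by fuel recursion. -/
noncomputable def polV {S : Type*} (A : ℕ) (f : S → Fin A → S) (R : S → Fin A → ℝ)
    (pi : ℕ → S → Fin A → ℝ) : ℕ → ℕ → S → ℝ
  | _, 0, _ => 0
  | t, n + 1, s => ∑ a : Fin A, pi t s a * (R s a + polV A f R pi (t + 1) n (f s a))

/-- `Q^π_t(s,a)` in a horizon-`T` deterministic MDP. -/
noncomputable def polQ {S : Type*} (A T : ℕ) (f : S → Fin A → S) (R : S → Fin A → ℝ)
    (pi : ℕ → S → Fin A → ℝ) (t : ℕ) (s : S) (a : Fin A) : ℝ :=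
  R s a + polV A f R pi (t + 1) (T - t) (f s a)

/-- Optimal value function by fuel recursion. -/
noncomputable def optV {S : Type*} (A : ℕ) (f : S → Fin A → S) (R : S → Fin A → ℝ) :
    ℕ → S → ℝ
  | 0, _ => 0
  | n + 1, s => ⨆ a : Fin A, (R s a + optV A f R n (f s a))

/-- Optimal Q-function at timestep `t` (horizon `T`). -/
noncomputable def optQ {S : Type*} (A T : ℕ) (f : S → Fin A → S) (R : S → Fin A → ℝ)
    (t : ℕ) (s : S) (a : Fin A) : ℝ :=
  R s a + optV A f R (T - t) (f s a)

/-- Trajectory of a deterministic policy: `polState ... t` is the state at timestep `t+1`. -/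
def polState {S : Type*} (A : ℕ) (f : S → Fin A → S) (p : ℕ → S → Fin A) (s1 : S) : ℕ → S
  | 0 => s1
  | t + 1 => f (polState A f p s1 t) (p (t + 1) (polState A f p s1 t))

lemma aux_sum_pos_iff {n : ℕ} {g : Fin n → ℝ} (h : ∀ a, 0 ≤ g a) :
    0 < ∑ a, g a ↔ ∃ a, 0 < g a := by
  constructor
  · intro h'
    by_contra hc
    push_neg at hc
    have : ∑ a, g a ≤ 0 := Finset.sum_nonpos fun i _ => hc i
    linarith
  · rintro ⟨a, ha⟩
    exact Finset.sum_pos' (fun i _ => h i) ⟨a, Finset.mem_univ a, ha⟩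

section aux

variable {S : Type*} {A : ℕ} (hA : 0 < A)
  {f : S → Fin A → S} {R : S → Fin A → ℝ} {G : Set S}
  (habs : ∀ s ∈ G, ∀ a, f s a = s)
  (hR : R = fun s a => if s ∉ G ∧ f s a ∈ G then 1 else 0)
  {pi : ℕ → S → Fin A → ℝ}
  (hpos : ∀ t s a, 0 < pi t s a)

include hR in
lemma aux_R_nonneg (s : S) (a : Fin A) : 0 ≤ R s a := by
  rw [hR]; dsimp only; split <;> norm_num

include hR in
lemma aux_R_mem (s : S) (a : Fin A) : R s a = 0 ∨ R s a = 1 := by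
  rw [hR]; dsimp only; split
  · right; rfl
  · left; rfl

include hR in
lemma aux_R_one {s : S} {a : Fin A} (h : R s a = 1) : f s a ∈ G := by
  rw [hR] at h; dsimp only at h; split at h
  · exact (by assumption : s ∉ G ∧ f s a ∈ G).2
  · norm_num at h

include habs hR in
lemma aux_polV_goal : ∀ (n t : ℕ) {s : S}, s ∈ G → polV A f R pi t n s = 0 := by
  intro n
  induction n with
  | zero => intro t s _; simp [polV]
  | succ n ih =>
    intro t s hs
    simp only [polV]
    apply Finset.sum_eq_zero
    intro a _
    have h1 : R s a = 0 := by rw [hR]; simp [hs]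
    rw [habs s hs a, h1, ih (t + 1) hs]
    ring

include habs hR hA in
lemma aux_optV_goal : ∀ (n : ℕ) {s : S}, s ∈ G → optV A f R n s = 0 := by
  haveI : Nonempty (Fin A) := ⟨⟨0, hA⟩⟩
  intro n
  induction n with
  | zero => intro s _; simp [optV]
  | succ n ih =>
    intro s hs
    simp only [optV]
    have h1 : ∀ a : Fin A, R s a + optV A f R n (f s a) = 0 := by
      intro a
      have h2 : R s a = 0 := by rw [hR]; simp [hs]
      rw [habs s hs a, h2, ih hs]; ring
    simp only [h1]
    exact ciSup_const

include habs hR hA in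
lemma aux_optV_mem : ∀ (n : ℕ) (s : S), optV A f R n s = 0 ∨ optV A f R n s = 1 := by
  haveI : Nonempty (Fin A) := ⟨⟨0, hA⟩⟩
  intro n
  induction n with
  | zero => intro s; left; simp [optV]
  | succ n ih =>
    intro s
    simp only [optV]
    obtain ⟨a, ha⟩ := exists_eq_ciSup_of_finite
      (f := fun a : Fin A => R s a + optV A f R n (f s a))
    rw [← ha]
    rcases aux_R_mem hR s a with h | h
    · rw [h]; simpa using ih (f s a)
    · rw [h, aux_optV_goal hA habs hR n (aux_R_one hR h)]
      right; norm_num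

include habs hR hA in
lemma aux_optV_nonneg (n : ℕ) (s : S) : 0 ≤ optV A f R n s := by
  rcases aux_optV_mem hA habs hR n s with h | h <;> rw [h] <;> norm_num

include habs hR hA in
lemma aux_optV_pos_iff (n : ℕ) (s : S) : 0 < optV A f R n s ↔ optV A f R n s = 1 := by
  rcases aux_optV_mem hA habs hR n s with h | h <;> rw [h] <;> norm_num

include hR hpos in
lemma aux_polV_nonneg : ∀ (n t : ℕ) (s : S), 0 ≤ polV A f R pi t n s := by
  intro n
  induction n with
  | zero => intro t s; simp [polV]
  | succ n ih =>
    intro t s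
    simp only [polV]
    apply Finset.sum_nonneg
    intro a _
    exact mul_nonneg (hpos t s a).le (add_nonneg (aux_R_nonneg hR s a) (ih (t + 1) (f s a)))

include hA habs hR hpos in
lemma aux_polV_pos_iff :
    ∀ (n t : ℕ) (s : S), 0 < polV A f R pi t n s ↔ optV A f R n s = 1 := by
  haveI : Nonempty (Fin A) := ⟨⟨0, hA⟩⟩
  intro n
  induction n with
  | zero => intro t s; norm_num [polV, optV]
  | succ n ih =>
    intro t s
    have hpi : 0 < polV A f R pi t (n + 1) s ↔
        ∃ a, 0 < R s a + polV A f R pi (t + 1) n (f s a) := by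
      simp only [polV]
      rw [aux_sum_pos_iff (fun a => mul_nonneg (hpos t s a).le
        (add_nonneg (aux_R_nonneg hR s a) (aux_polV_nonneg hR hpos n (t + 1) (f s a))))]
      exact exists_congr fun a => mul_pos_iff_of_pos_left (hpos t s a)
    have hoi : optV A f R (n + 1) s = 1 ↔
        ∃ a, 0 < R s a + optV A f R n (f s a) := by
      rw [← aux_optV_pos_iff hA habs hR (n + 1) s]
      simp only [optV]
      constructor
      · intro h
        obtain ⟨a, ha⟩ := exists_eq_ciSup_of_finite
          (f := fun a : Fin A => R s a + optV A f R n (f s a))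
        exact ⟨a, by rw [ha]; exact h⟩
      · rintro ⟨a, ha⟩
        exact lt_of_lt_of_le ha
          (le_ciSup (f := fun a : Fin A => R s a + optV A f R n (f s a))
            (Set.Finite.bddAbove (Set.finite_range _)) a)
    rw [hpi, hoi]
    apply exists_congr
    intro a
    rcases aux_R_mem hR s a with h | h
    · rw [h]
      simp only [zero_add]
      rw [ih (t + 1) (f s a), ← aux_optV_pos_iff hA habs hR n (f s a)]
    · rw [h]
      have h1 := aux_polV_nonneg hR hpos n (t + 1) (f s a)
      have h2 := aux_optV_nonneg hA habs hR n (f s a)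
      constructor <;> intro <;> linarith

include hA habs hR hpos in
lemma aux_polQ_pos_iff (T t : ℕ) (s : S) (a : Fin A) :
    0 < polQ A T f R pi t s a ↔ optQ A T f R t s a = 1 := by
  unfold polQ optQ
  have key : 0 < R s a + polV A f R pi (t + 1) (T - t) (f s a) ↔
      0 < R s a + optV A f R (T - t) (f s a) := by
    rcases aux_R_mem hR s a with h | h
    · rw [h]
      simp only [zero_add]
      rw [aux_polV_pos_iff hA habs hR hpos (T - t) (t + 1) (f s a),
        ← aux_optV_pos_iff hA habs hR (T - t) (f s a)]
    · rw [h]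
      have h1 := aux_polV_nonneg hR hpos (T - t) (t + 1) (f s a)
      have h2 := aux_optV_nonneg hA habs hR (T - t) (f s a)
      constructor <;> intro <;> linarith
  rw [key]
  rcases aux_R_mem hR s a with h | h
  · rw [h]
    simp only [zero_add]
    exact aux_optV_pos_iff hA habs hR (T - t) (f s a)
  · rw [h, aux_optV_goal hA habs hR (T - t) (aux_R_one hR h)]
    norm_num

include habs hR in
lemma aux_seqReturn_goal : ∀ (l : List (Fin A)) {s : S}, s ∈ G → seqReturn A f R s l = 0 := by
  intro l
  induction l with
  | nil => intro s _; simp [seqReturn]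
  | cons a l ih =>
    intro s hs
    simp only [seqReturn]
    have h1 : R s a = 0 := by rw [hR]; simp [hs]
    rw [h1, habs s hs a, ih hs]
    ring

end aux

/--
Goal MDPs are `1`-QVI-solvable.  In a deterministic goal MDP (absorbing
goal set `G`, reward `1` exactly on transitions entering `G`), if the exploration policy
`pi` assigns positive probability to every action in every state, then for every timestep
`t ∈ [1,T]`, state `s` and action `a`: `Q^pi_t(s,a) > 0 ↔ Q*_t(s,a) = 1`.  Hence,
assuming the goal is reachable from the start state (`V*₁(s₁) = 1`), every policy greedy
with respect to `Q^pi` achieves the optimal return.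
-/
theorem goal_mdp_one_qvi_solvable
    {S : Type*} (A T : ℕ) (hA : 0 < A) (hT : 1 ≤ T)
    (f : S → Fin A → S) (R : S → Fin A → ℝ) (s1 : S)
    (G : Set S)
    (habs : ∀ s ∈ G, ∀ a, f s a = s)
    (hR : R = fun s a => if s ∉ G ∧ f s a ∈ G then 1 else 0)
    (pi : ℕ → S → Fin A → ℝ)
    (hpos : ∀ t s a, 0 < pi t s a)
    (hprob : ∀ t s, ∑ a : Fin A, pi t s a = 1)
    (hreach : optV A f R T s1 = 1) :
    -- (a) positive exploration Q-value iff optimal Q-value is 1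
    (∀ t s a, 1 ≤ t → t ≤ T →
      (0 < polQ A T f R pi t s a ↔ optQ A T f R t s a = 1)) ∧
    -- (b) every policy greedy w.r.t. Q^pi is optimal
    (∀ p : ℕ → S → Fin A,
      (∀ t s a, 1 ≤ t → t ≤ T →
          polQ A T f R pi t s a ≤ polQ A T f R pi t s (p t s)) →
      seqReturn A f R s1
          (List.ofFn (fun i : Fin T => p (i + 1) (polState A f p s1 i)))
        = optV A f R T s1) := by
  haveI : Nonempty (Fin A) := ⟨⟨0, hA⟩⟩
  refine ⟨fun t s a _ _ => aux_polQ_pos_iff hA habs hR hpos T t s a, ?_⟩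
  intro p hg
  -- the one-step greedy property
  have step : ∀ m d, m + (d + 1) = T →
      optV A f R (d + 1) (polState A f p s1 m) = 1 →
      R (polState A f p s1 m) (p (m + 1) (polState A f p s1 m)) +
        optV A f R d (f (polState A f p s1 m) (p (m + 1) (polState A f p s1 m))) = 1 := by
    intro m d hm h1
    set s := polState A f p s1 m with hs
    have hTd : T - (m + 1) = d := by omega
    -- find an optimal action
    obtain ⟨a, ha⟩ := exists_eq_ciSup_of_finite
      (f := fun a : Fin A => R s a + optV A f R d (f s a))
    have hopt : optQ A T f R (m + 1) s a = 1 := by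
      unfold optQ
      rw [hTd, ha]
      simpa only [optV] using h1
    have hpol : 0 < polQ A T f R pi (m + 1) s a :=
      (aux_polQ_pos_iff hA habs hR hpos T (m + 1) s a).2 hopt
    have hgr := hg (m + 1) s a (by omega) (by omega)
    have hpol' : 0 < polQ A T f R pi (m + 1) s (p (m + 1) s) := lt_of_lt_of_le hpol hgr
    have hopt' := (aux_polQ_pos_iff hA habs hR hpos T (m + 1) s (p (m + 1) s)).1 hpol'
    unfold optQ at hopt'
    rwa [hTd] at hopt'
  -- main induction along the trajectory
  have main : ∀ d m, m + d = T → optV A f R d (polState A f p s1 m) = 1 →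
      seqReturn A f R (polState A f p s1 m)
        (List.ofFn fun i : Fin d => p (m + 1 + (i : ℕ)) (polState A f p s1 (m + (i : ℕ)))) = 1 := by
    intro d
    induction d with
    | zero =>
      intro m _ h1
      simp only [optV] at h1
      norm_num at h1
    | succ d ih =>
      intro m hm h1
      rw [List.ofFn_succ]
      simp only [seqReturn, Fin.val_succ, Fin.val_zero, Nat.add_zero]
      have hstep := step m d hm h1
      have hnext : f (polState A f p s1 m) (p (m + 1) (polState A f p s1 m)) =
          polState A f p s1 (m + 1) := rfl
      rw [hnext] at hstep ⊢
      have hlist : (List.ofFn fun i : Fin d =>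
            p (m + 1 + ((i : ℕ) + 1)) (polState A f p s1 (m + ((i : ℕ) + 1)))) =
          (List.ofFn fun i : Fin d =>
            p (m + 1 + 1 + (i : ℕ)) (polState A f p s1 (m + 1 + (i : ℕ)))) := by
        congr 1
        funext i
        congr 1 <;> [omega; (congr 1; omega)]
      rw [hlist]
      rcases aux_R_mem hR (polState A f p s1 m) (p (m + 1) (polState A f p s1 m)) with h | h
      · rw [h] at hstep ⊢
        rw [ih (m + 1) (by omega) (by linarith)]
        ring
      · rw [h]
        rw [aux_seqReturn_goal habs hR _
          (show polState A f p s1 (m + 1) ∈ G from hnext ▸ aux_R_one hR h)]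
        ring
  have h0 : polState A f p s1 0 = s1 := rfl
  have := main T 0 (by omega) (by rw [h0]; exact hreach)
  rw [h0] at this
  rw [show (fun i : Fin T => p (0 + 1 + (i : ℕ)) (polState A f p s1 (0 + (i : ℕ)))) =
      (fun i : Fin T => p ((i : ℕ) + 1) (polState A f p s1 (i : ℕ))) from
    funext fun i => by rw [Nat.zero_add, Nat.zero_add, Nat.add_comm]] at this
  rw [hreach]
  exact this
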